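/- Let G = (N, E, w) be a weighted graph with nonnegative edge weights and n = |N| ≥ 2 vertices, let v be the characteristic function of the matching game MG(G), and let i ∈ N be a vertex with at least one incident edge of positive weight. Let σ be a permutation of N chosen uniformly at random, and let X be the random variable X(σ) = n! · (v(p(i, σ) ∪ {i}) − v(p(i, σ))), where p(i, σ) is the set of players preceding i in σ. Then E[X] = κ_i(N, v) and Var[X] ≤ n² · (n − 1)² · κ_i(N, v)². -/

import Mathlib

attribute [local instance] Classical.propDecidable

/-- `M` is a matching of the subgraph of the graph with edge set `E` induced by
the vertex set `S`. -/
def IsMatchingOn {V : Type*} (E : Finset (Sym2 V)) (S : Finset V) (M : Finset (Sym2 V)) : Prop :=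
  M ⊆ E ∧ (∀ e ∈ M, ¬ e.IsDiag) ∧ (∀ e ∈ M, ∀ x ∈ e, x ∈ S) ∧
    (∀ e ∈ M, ∀ f ∈ M, e ≠ f → ∀ x ∈ e, x ∉ f)

/-- Value of a coalition `S` in the weighted matching game on the graph with edge set `E` and
weights `w`: the maximum total weight of a matching in the induced subgraph on `S`. -/
noncomputable def matchVal {V : Type*} (E : Finset (Sym2 V)) (w : Sym2 V → ℝ)
    (S : Finset V) : ℝ :=
  sSup {x : ℝ | ∃ M : Finset (Sym2 V), IsMatchingOn E S M ∧ x = ∑ e ∈ M, w e}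

/-- Value of a coalition `S` in the unweighted matching game: the maximum cardinality of a
matching in the induced subgraph on `S`. -/
noncomputable def umatchVal {V : Type*} (E : Finset (Sym2 V)) (S : Finset V) : ℕ :=
  sSup {k : ℕ | ∃ M : Finset (Sym2 V), IsMatchingOn E S M ∧ k = M.card}

/-- The Shapley value of player `i` in the cooperative game with (finite) player set `N` and
characteristic function `v`. -/
noncomputable def shapley {V : Type*} [DecidableEq V] (N : Finset V) (v : Finset V → ℝ)
    (i : V) : ℝ :=
  (1 / (Nat.factorial N.card) : ℝ) *
    ∑ S ∈ (N.erase i).powerset,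
      (Nat.factorial S.card : ℝ) * (Nat.factorial (N.card - S.card - 1) : ℝ) *
        (v (insert i S) - v S)

/-- The raw Shapley value of player `i` in the cooperative game with player set `N` and
characteristic function `v`. -/
noncomputable def rawShapley {V : Type*} [DecidableEq V] (N : Finset V) (v : Finset V → ℝ)
    (i : V) : ℝ :=
  ∑ S ∈ (N.erase i).powerset,
    (Nat.factorial S.card : ℝ) * (Nat.factorial (N.card - S.card - 1) : ℝ) *
      (v (insert i S) - v S)

/-- The set `p(i, σ)` of players occurring before `i` in the permutation `σ`. -/
def before {n : ℕ} (i : Fin n) (σ : Equiv.Perm (Fin n)) : Finset (Fin n) :=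
  Finset.univ.filter (fun j => σ.symm j < σ.symm i)

/-!
A permutation `σ` has `before i σ = S` exactly when `σ⁻¹` sends `S` onto the first `|S|`
positions and `i` to position `|S|`; counting these as a coset of the stabiliser of a
three-valued labelling gives `|S|! (n - |S| - 1)!` permutations, so summing the marginal
contributions of `i` over all permutations yields the raw Shapley value `κ`.

For the variance, an optimal matching of `S ∪ {i}` either leaves `i` unmatched or uses one edge
`s(i, j)`, so the marginal contribution of `i` to any coalition is at most `v {i, j}` for some
`j ≠ i`. That value alone contributes `(n - 2)! v {i, j}` to `κ`, whence `0 ≤ X ≤ n (n - 1) κ`,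
and the Bhatia–Davis inequality bounds the variance by `(n (n - 1) κ - κ) κ ≤ n² (n - 1)² κ²`.
-/

open scoped Nat

section MatchingGame

variable {V : Type*} {E : Finset (Sym2 V)} {S T : Finset V} {M M' : Finset (Sym2 V)}

lemma isMatchingOn_empty (E : Finset (Sym2 V)) (S : Finset V) : IsMatchingOn E S ∅ := by
  simp [IsMatchingOn]

lemma IsMatchingOn.subset (hM : IsMatchingOn E S M) (hM' : M' ⊆ M)
    (hT : ∀ e ∈ M', ∀ x ∈ e, x ∈ T) : IsMatchingOn E T M' :=
  ⟨hM'.trans hM.1, fun e he => hM.2.1 e (hM' he), hT,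
    fun e he f hf => hM.2.2.2 e (hM' he) f (hM' hf)⟩

lemma IsMatchingOn.mono (hM : IsMatchingOn E S M) (hST : S ⊆ T) : IsMatchingOn E T M :=
  hM.subset subset_rfl fun e he x hx => hST (hM.2.2.1 e he x hx)

lemma isMatchingOn_singleton {e : Sym2 V} (he : e ∈ E) (hd : ¬ e.IsDiag) (hS : ∀ x ∈ e, x ∈ S) :
    IsMatchingOn E S {e} := by
  refine ⟨by simpa using he, by simpa using hd, by simpa using hS, ?_⟩
  simp

variable (w : Sym2 V → ℝ)

lemma finite_matchingWeights (E : Finset (Sym2 V)) (S : Finset V) :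
    {x : ℝ | ∃ M : Finset (Sym2 V), IsMatchingOn E S M ∧ x = ∑ e ∈ M, w e}.Finite := by
  refine ((E.powerset.finite_toSet).image (fun M => ∑ e ∈ M, w e)).subset ?_
  rintro x ⟨M, hM, rfl⟩
  exact ⟨M, by simpa using hM.1, rfl⟩

lemma exists_isMatchingOn_matchVal_eq (E : Finset (Sym2 V)) (S : Finset V) :
    ∃ M, IsMatchingOn E S M ∧ matchVal E w S = ∑ e ∈ M, w e :=
  have hne : {x : ℝ | ∃ M, IsMatchingOn E S M ∧ x = ∑ e ∈ M, w e}.Nonempty :=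
    ⟨0, ∅, isMatchingOn_empty E S, by simp⟩
  hne.csSup_mem (finite_matchingWeights w E S)

lemma IsMatchingOn.sum_le_matchVal (hM : IsMatchingOn E S M) : ∑ e ∈ M, w e ≤ matchVal E w S :=
  le_csSup (finite_matchingWeights w E S).bddAbove ⟨M, hM, rfl⟩

lemma matchVal_nonneg : 0 ≤ matchVal E w S := by
  simpa using (isMatchingOn_empty E S).sum_le_matchVal w

lemma matchVal_mono (E : Finset (Sym2 V)) : Monotone (matchVal E w) := fun S _ hST => by
  obtain ⟨M, hM, hval⟩ := exists_isMatchingOn_matchVal_eq w E S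
  exact hval ▸ (hM.mono hST).sum_le_matchVal w

lemma matchVal_singleton (j : V) : matchVal E w {j} = 0 := by
  obtain ⟨M, hM, hval⟩ := exists_isMatchingOn_matchVal_eq w E {j}
  suffices M = ∅ by simp [hval, this]
  refine Finset.eq_empty_of_forall_notMem fun e he => hM.2.1 e he ?_
  induction e using Sym2.ind with
  | _ a b =>
    have ha := hM.2.2.1 _ he a (by simp)
    have hb := hM.2.2.1 _ he b (by simp)
    simp_all

variable [DecidableEq V]

lemma exists_matchVal_insert_le_add (i j₀ : V) (hj₀ : j₀ ≠ i) :
    ∃ j ≠ i, matchVal E w (insert i S) ≤ matchVal E w S + matchVal E w {i, j} := by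
  obtain ⟨M, hM, hval⟩ := exists_isMatchingOn_matchVal_eq w E (insert i S)
  have mem_of_notMem {e x} (he : e ∈ M) (hx : x ∈ e) (hie : i ∉ e) : x ∈ S :=
    (Finset.mem_insert.1 (hM.2.2.1 e he x hx)).resolve_left fun h => hie (h ▸ hx)
  by_cases hi : ∃ e ∈ M, i ∈ e
  · obtain ⟨e, heM, hie⟩ := hi
    have hd := hM.2.1 e heM
    refine ⟨Sym2.Mem.other hie, Sym2.other_ne hd hie, ?_⟩
    have hrest : IsMatchingOn E S (M.erase e) := by
      refine hM.subset (M.erase_subset e) fun f hf x hx => ?_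
      obtain ⟨hfe, hfM⟩ := Finset.mem_erase.1 hf
      exact mem_of_notMem hfM hx fun hif => hM.2.2.2 e heM f hfM hfe.symm i hie hif
    have hedge : IsMatchingOn E {i, Sym2.Mem.other hie} {e} := by
      refine isMatchingOn_singleton (hM.1 heM) hd fun x hx => ?_
      rw [← Sym2.other_spec hie, Sym2.mem_iff] at hx
      rcases hx with rfl | rfl <;> simp
    rw [hval, ← Finset.add_sum_erase M w heM, add_comm]
    exact add_le_add (hrest.sum_le_matchVal w) (by simpa using hedge.sum_le_matchVal w)
  · push Not at hi
    have hS : IsMatchingOn E S M :=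
      hM.subset subset_rfl fun e he x hx => mem_of_notMem he hx (hi e he)
    refine ⟨j₀, hj₀, ?_⟩
    rw [hval]
    linarith [hS.sum_le_matchVal w, matchVal_nonneg w (E := E) (S := {i, j₀})]

end MatchingGame

lemma Nat.card_equiv_comp_eq {α β ι : Type*} [Finite α] [Finite β] [Fintype ι]
    (f : α → ι) (g : β → ι) (h : ∀ c, Nat.card {a // f a = c} = Nat.card {b // g b = c}) :
    Nat.card {π : α ≃ β // g ∘ π = f} = ∏ c, (Nat.card {a // f a = c})! := by
  obtain ⟨π₀, hπ₀⟩ : ∃ π₀ : α ≃ β, g ∘ π₀ = f :=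
    ⟨_, funext (Equiv.ofFiberEquiv_map fun c => (Finite.card_eq.1 (h c)).some)⟩
  have hstab := DomMulAct.stabilizer_ncard f
  simp only [← Nat.card_coe_set_eq, Set.coe_ofPred] at hstab
  rw [← hstab]
  refine Nat.card_congr (Equiv.subtypeEquiv ((Equiv.refl α).equivCongr π₀.symm) fun π => ?_)
  rw [← hπ₀]
  simp [Function.comp_def, funext_iff]

def beforePattern {V : Type*} [DecidableEq V] (i : V) (S : Finset V) (j : V) : Ordering :=
  if j ∈ S then .lt else if j = i then .eq else .gt

lemma card_filter_apply_lt {n : ℕ} (π : Equiv.Perm (Fin n)) (k : Fin n) :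
    (Finset.univ.filter fun j => π j < k).card = k := by
  rw [← Fin.card_Iio, ← Finset.card_map π.toEmbedding]
  congr 1
  ext p
  simp only [Finset.mem_map, Finset.mem_filter, Finset.mem_univ, true_and, Finset.mem_Iio,
    Equiv.coe_toEmbedding]
  exact ⟨fun ⟨j, hj, hjp⟩ => hjp ▸ hj, fun hp => ⟨π.symm p, by simpa using hp, by simp⟩⟩

lemma before_eq_iff {n : ℕ} {i : Fin n} {S : Finset (Fin n)} (hi : i ∉ S) (hS : S.card < n)
    (σ : Equiv.Perm (Fin n)) :
    before i σ = S ↔ (fun p => compare p ⟨S.card, hS⟩) ∘ σ.symm = beforePattern i S := by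
  constructor
  · rintro rfl
    have hpos : (⟨(before i σ).card, hS⟩ : Fin n) = σ.symm i :=
      Fin.ext (card_filter_apply_lt σ.symm (σ.symm i))
    funext j
    rw [Function.comp_apply, hpos]
    rcases lt_trichotomy (σ.symm j) (σ.symm i) with h | h | h
    · simp [beforePattern, before, h, compare_lt_iff_lt.2 h]
    · simp [beforePattern, before, σ.symm.injective h]
    · have hji : j ≠ i := by rintro rfl; exact h.false
      simp [beforePattern, before, h.not_gt, hji, compare_gt_iff_gt.2 h]
  · intro h
    have hpos : σ.symm i = ⟨S.card, hS⟩ := by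
      simpa [beforePattern, hi] using congrFun h i
    ext j
    rw [before, Finset.mem_filter, hpos, ← compare_lt_iff_lt]
    have hj := congrFun h j
    simp only [Function.comp_apply, beforePattern] at hj
    rw [hj]
    split_ifs <;> simp_all

lemma card_beforePattern_fiber {n : ℕ} {i : Fin n} {S : Finset (Fin n)} (hi : i ∉ S)
    (hS : S.card < n) (c : Ordering) :
    Nat.card {j // beforePattern i S j = c} =
      Nat.card {p : Fin n // compare p ⟨S.card, hS⟩ = c} := by
  simp only [Nat.card_eq_fintype_card]
  cases c
  · simp [Fintype.card_subtype, beforePattern, compare_lt_iff_lt, Finset.filter_gt_eq_Iio]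
  · have : Finset.univ.filter (fun x => x ∉ S ∧ x = i) = {i} := by
      ext x; constructor <;> simp +contextual [hi]
    simp [Fintype.card_subtype, beforePattern, this]
  · calc Fintype.card {j // beforePattern i S j = .gt}
        = Fintype.card {j // j ∉ insert i S} :=
          Fintype.card_congr (Equiv.subtypeEquivRight fun j => by
            unfold beforePattern; split_ifs <;> simp_all)
      _ = Fintype.card {p : Fin n // compare p ⟨S.card, hS⟩ = .gt} := by
        rw [Fintype.card_subtype_compl, Fintype.card_fin, Fintype.card_coe,
          Finset.card_insert_of_notMem hi]
        simp only [Fintype.card_subtype, compare_gt_iff_gt, Finset.filter_lt_eq_Ioi, Fin.card_Ioi]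
        omega

lemma card_filter_before_eq {n : ℕ} {i : Fin n} {S : Finset (Fin n)} (hi : i ∉ S) :
    (Finset.univ.filter fun σ : Equiv.Perm (Fin n) => before i σ = S).card
      = S.card ! * (n - S.card - 1)! := by
  have hS : S.card < n := by simpa using Finset.card_lt_univ_of_notMem hi
  have hpattern := card_beforePattern_fiber hi hS
  rw [← Fintype.card_subtype, ← Nat.card_eq_fintype_card]
  calc Nat.card {σ : Equiv.Perm (Fin n) // before i σ = S}
      = Nat.card {π : Equiv.Perm (Fin n) //
          (fun p => compare p ⟨S.card, hS⟩) ∘ π = beforePattern i S} :=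
        Nat.card_congr (Equiv.subtypeEquiv (Equiv.symmEquiv _ _) (before_eq_iff hi hS))
    _ = ∏ c, (Nat.card {j // beforePattern i S j = c})! :=
        Nat.card_equiv_comp_eq _ _ hpattern
    _ = S.card ! * (n - S.card - 1)! := by
        rw [show (Finset.univ : Finset Ordering) = {.lt, .eq, .gt} from rfl]
        simp only [hpattern]
        simp [Fintype.card_subtype, compare_lt_iff_lt, compare_gt_iff_gt,
          Finset.filter_gt_eq_Iio, Finset.filter_lt_eq_Ioi, Finset.filter_eq',
          Nat.sub_right_comm n 1]

lemma sum_perm_before {n : ℕ} (i : Fin n) (F : Finset (Fin n) → ℝ) :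
    ∑ σ : Equiv.Perm (Fin n), F (before i σ)
      = ∑ S ∈ (Finset.univ.erase i).powerset, (S.card ! : ℝ) * ((n - S.card - 1)! : ℝ) * F S := by
  have hmaps : ∀ σ ∈ (Finset.univ : Finset (Equiv.Perm (Fin n))),
      before i σ ∈ (Finset.univ.erase i).powerset := fun σ _ => by
    simp only [Finset.mem_powerset, Finset.subset_iff, before, Finset.mem_filter]
    rintro j ⟨-, hj⟩
    exact Finset.mem_erase.2 ⟨by rintro rfl; exact hj.false, Finset.mem_univ j⟩
  rw [← Finset.sum_fiberwise_of_maps_to hmaps]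
  refine Finset.sum_congr rfl fun S hS => ?_
  have hi : i ∉ S := fun h => by simpa using Finset.mem_powerset.1 hS h
  rw [Finset.sum_congr rfl fun σ hσ => by rw [(Finset.mem_filter.1 hσ).2], Finset.sum_const,
    nsmul_eq_mul, card_filter_before_eq hi]
  push_cast
  ring

lemma sum_marginal_before_eq_rawShapley {n : ℕ} (v : Finset (Fin n) → ℝ) (i : Fin n) :
    ∑ σ : Equiv.Perm (Fin n), (v (insert i (before i σ)) - v (before i σ))
      = rawShapley Finset.univ v i := by
  rw [sum_perm_before i fun S => v (insert i S) - v S, rawShapley, Finset.card_univ,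
    Fintype.card_fin]

lemma factorial_mul_marginal_le_rawShapley {n : ℕ} {v : Finset (Fin n) → ℝ} (hv : Monotone v)
    {i j : Fin n} (hji : j ≠ i) :
    (n ! : ℝ) * (v {i, j} - v {j}) ≤ n * (n - 1) * rawShapley Finset.univ v i := by
  have hn : 2 ≤ n := Fin.nontrivial_iff_two_le.1 ⟨⟨j, i, hji⟩⟩
  have hterm : ((n - 2)! : ℝ) * (v {i, j} - v {j}) ≤ rawShapley Finset.univ v i := by
    have hsingle := Finset.single_le_sum (f := fun S => (S.card ! : ℝ) *
        (((Finset.univ : Finset (Fin n)).card - S.card - 1)! : ℝ) * (v (insert i S) - v S))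
      (fun S _ => mul_nonneg (by positivity) (sub_nonneg.2 (hv (Finset.subset_insert i S))))
      (show {j} ∈ (Finset.univ.erase i).powerset by simpa using hji)
    simpa [rawShapley, Nat.sub_sub] using hsingle
  have hfact : (n ! : ℝ) = n * (n - 1) * (n - 2)! := by
    obtain ⟨m, rfl⟩ := Nat.exists_eq_add_of_le' hn
    push_cast [Nat.factorial_succ]
    ring
  have hn1 : (0 : ℝ) ≤ n * (n - 1) := by
    have : (2 : ℝ) ≤ n := by exact_mod_cast hn
    nlinarith
  rw [hfact, mul_assoc]
  exact mul_le_mul_of_nonneg_left hterm hn1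

lemma Finset.sum_sq_sub_le_mul_sub_mul_sub {ι : Type*} (s : Finset ι) (X : ι → ℝ) {m M μ : ℝ}
    (hm : ∀ i ∈ s, m ≤ X i) (hM : ∀ i ∈ s, X i ≤ M) (hμ : ∑ i ∈ s, X i = s.card * μ) :
    ∑ i ∈ s, (X i - μ) ^ 2 ≤ s.card * ((M - μ) * (μ - m)) := by
  have hsplit : ∑ i ∈ s, (X i - μ) ^ 2 + ∑ i ∈ s, (M - X i) * (X i - m)
      = s.card * ((M - μ) * (μ - m)) := by
    rw [← Finset.sum_add_distrib]
    simp_rw [show ∀ i, (X i - μ) ^ 2 + (M - X i) * (X i - m)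
      = (M + m - 2 * μ) * X i + (μ ^ 2 - M * m) from fun i => by ring]
    rw [Finset.sum_add_distrib, ← Finset.mul_sum, hμ, Finset.sum_const, nsmul_eq_mul]
    ring
  have hnonneg : 0 ≤ ∑ i ∈ s, (M - X i) * (X i - m) :=
    Finset.sum_nonneg fun i hi => mul_nonneg (sub_nonneg.2 (hM i hi)) (sub_nonneg.2 (hm i hi))
  linarith

theorem sampling_mean_and_variance_general (n : ℕ) (hn : 2 ≤ n)
    (E : Finset (Sym2 (Fin n))) (w : Sym2 (Fin n) → ℝ)
    (i : Fin n)
    (κ : ℝ) (hκ : κ = rawShapley Finset.univ (matchVal E w) i)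
    (X : Equiv.Perm (Fin n) → ℝ)
    (hX : ∀ σ, X σ = (Nat.factorial n : ℝ) *
      (matchVal E w (insert i (before i σ)) - matchVal E w (before i σ))) :
    (∑ σ : Equiv.Perm (Fin n), X σ) / (Nat.factorial n : ℝ) = κ ∧
      (∑ σ : Equiv.Perm (Fin n), (X σ - κ) ^ 2) / (Nat.factorial n : ℝ) ≤
        (n : ℝ) ^ 2 * ((n : ℝ) - 1) ^ 2 * κ ^ 2 := by
  have hsum : ∑ σ, X σ = (Finset.univ : Finset (Equiv.Perm (Fin n))).card * κ := by
    simp_rw [hX, ← Finset.mul_sum, sum_marginal_before_eq_rawShapley, hκ, Finset.card_univ,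
      Fintype.card_perm, Fintype.card_fin]
  have hX0 : ∀ σ, 0 ≤ X σ := fun σ => by
    rw [hX]
    exact mul_nonneg (by positivity) (sub_nonneg.2 (matchVal_mono w E (Finset.subset_insert _ _)))
  have : Nontrivial (Fin n) := Fin.nontrivial_iff_two_le.2 hn
  obtain ⟨j₀, hj₀⟩ := exists_ne i
  have hXle : ∀ σ, X σ ≤ n * (n - 1) * κ := fun σ => by
    obtain ⟨j, hji, hj⟩ := exists_matchVal_insert_le_add w (S := before i σ) (E := E) i j₀ hj₀
    calc X σ ≤ (n ! : ℝ) * (matchVal E w {i, j} - matchVal E w {j}) := by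
          rw [hX, matchVal_singleton, sub_zero]
          exact mul_le_mul_of_nonneg_left (by linarith) (by positivity)
      _ ≤ n * (n - 1) * κ := hκ ▸ factorial_mul_marginal_le_rawShapley (matchVal_mono w E) hji
  have hvar := Finset.univ.sum_sq_sub_le_mul_sub_mul_sub X (fun σ _ => hX0 σ)
    (fun σ _ => hXle σ) hsum
  rw [Finset.card_univ, Fintype.card_perm, Fintype.card_fin] at hsum hvar
  have hfact : (0 : ℝ) < n ! := by positivity
  constructor
  · rw [hsum]
    field_simp
  · rw [div_le_iff₀ hfact]
    have : (0 : ℝ) ≤ n ! * κ ^ 2 * ((n * (n - 1)) ^ 2 - n * (n - 1) + 1) := by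
      apply mul_nonneg (by positivity)
      nlinarith [sq_nonneg ((n : ℝ) * (n - 1) - 1)]
    nlinarith

/-- For a uniformly random permutation `σ`, the random variable
`X(σ) = n! · (marginal contribution of i to σ)` has expectation `κ_i` and variance at most
`n² (n-1)² κ_i²`. -/
theorem sampling_mean_and_variance (n : ℕ) (hn : 2 ≤ n)
    (E : Finset (Sym2 (Fin n))) (w : Sym2 (Fin n) → ℝ)
    (hloop : ∀ e ∈ E, ¬ e.IsDiag) (hw : ∀ e ∈ E, 0 ≤ w e)
    (i : Fin n) (hinc : ∃ e ∈ E, i ∈ e ∧ 0 < w e)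
    (κ : ℝ) (hκ : κ = rawShapley Finset.univ (matchVal E w) i)
    (X : Equiv.Perm (Fin n) → ℝ)
    (hX : ∀ σ, X σ = (Nat.factorial n : ℝ) *
      (matchVal E w (insert i (before i σ)) - matchVal E w (before i σ))) :
    (∑ σ : Equiv.Perm (Fin n), X σ) / (Nat.factorial n : ℝ) = κ ∧
      (∑ σ : Equiv.Perm (Fin n), (X σ - κ) ^ 2) / (Nat.factorial n : ℝ) ≤
        (n : ℝ) ^ 2 * ((n : ℝ) - 1) ^ 2 * κ ^ 2 :=
  sampling_mean_and_variance_general n hn E w i κ hκ X hX
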